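/- Let k be a perfect field of characteristic p, W(k) its ring of Witt vectors with Frobenius φ, and K₀ = Frac(W(k)). Let D be a finite-dimensional K₀-vector space with a bijective φ-semilinear endomorphism φ_D. Then V(D) := {x ∈ D ⊗_{K₀} K̂₀ᵘʳ : (φ_D ⊗ φ)(x) = x} is a ℚ_p-vector space, and the natural map V(D) ⊗_{ℚ_p} K̂₀ᵘʳ → D ⊗_{K₀} K̂₀ᵘʳ is injective; its image is the slope-0 part of D ⊗ K̂₀ᵘʳ. In particular dim_{ℚ_p} V(D) equals the dimension of the slope-0 part of D. -/

import Mathlib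

open TensorProduct

/-! A nontrivial `L`-linear relation among `Φ`-fixed vectors with minimal support can be
normalised to have some coefficient equal to `1`; applying `Φ` and subtracting gives a relation
with smaller support, so all coefficients are `σ`-fixed, i.e. lie in `F`. -/

section
variable {L M ι : Type*} [Field L] [AddCommGroup M] [Module L M] {σ : L →+* L}
  (f : M →ₛₗ[σ] M) {v : ι → M}

theorem LinearMap.map_sum_smul_of_fixed (hv : ∀ i, f (v i) = v i) (s : Finset ι) (c : ι → L) :
    f (∑ i ∈ s, c i • v i) = ∑ i ∈ s, σ (c i) • v i := by
  simp only [map_sum, LinearMap.map_smulₛₗ, hv]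

theorem linearIndependent_of_fixed {F : Subfield L} (hF : ∀ c, σ c = c → c ∈ F)
    (hv : ∀ i, f (v i) = v i) (hind : LinearIndependent F v) : LinearIndependent L v := by
  classical
  rw [linearIndependent_iff']
  intro s
  induction s using Finset.strongInduction with
  | H s ih =>
    intro c hc i hi
    by_contra hci
    set d : ι → L := fun k => (c i)⁻¹ * c k
    have hdi : d i = 1 := inv_mul_cancel₀ hci
    have hd : ∑ k ∈ s, d k • v k = 0 := by
      simp only [d, mul_smul, ← Finset.smul_sum, hc, smul_zero]
    have hσd : ∑ k ∈ s, (σ (d k) - d k) • v k = 0 := by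
      simp only [sub_smul, Finset.sum_sub_distrib, ← f.map_sum_smul_of_fixed hv, hd, map_zero,
        sub_zero]
    have hd_fixed : ∀ k ∈ s, d k ∈ F := by
      have h := ih (s.erase i) (Finset.erase_ssubset hi) (fun k => σ (d k) - d k)
        (by rwa [← Finset.add_sum_erase s _ hi, hdi, map_one, sub_self, zero_smul, zero_add] at hσd)
      intro k hk
      apply hF
      by_cases hki : k = i
      · rw [hki, hdi, map_one]
      · exact sub_eq_zero.mp (h k (Finset.mem_erase.mpr ⟨hki, hk⟩))
    have hdi_zero := Fintype.linearIndependent_iff.mp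
      (hind.comp ((↑) : s → ι) Subtype.val_injective) (fun k => ⟨d k, hd_fixed k k.2⟩)
      (by simpa only [Function.comp_apply, Subfield.smul_def,
        Finset.sum_coe_sort s (fun k => d k • v k)] using hd) ⟨i, hi⟩
    exact one_ne_zero (hdi.symm.trans (congrArg Subtype.val hdi_zero))
end

theorem stmt6_general (K₀ L : Type*) [Field K₀] [Field L] [Algebra K₀ L]
    (σ : L ≃+* L)
    (D : Type*) [AddCommGroup D] [Module K₀ D]
    (Φ : L ⊗[K₀] D → L ⊗[K₀] D)
    (haddΦ : ∀ x y, Φ (x + y) = Φ x + Φ y)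
    (hsemiΦ : ∀ (c : L) (x : L ⊗[K₀] D), Φ (c • x) = σ c • Φ x)
    (F : Subfield L) (hF : ∀ c : L, c ∈ F ↔ σ c = c) :
    (∀ (c : L) (x : L ⊗[K₀] D), c ∈ F → Φ x = x → Φ (c • x) = c • x) ∧
    (∀ (ι : Type) (v : ι → L ⊗[K₀] D), (∀ i, Φ (v i) = v i) →
      (∀ (s : Finset ι) (c : ι → L), (∀ i, c i ∈ F) →
        (∑ i ∈ s, c i • v i) = 0 → ∀ i ∈ s, c i = 0) →
      LinearIndependent L v) ∧
    (∀ (ι : Type) (v : ι → L ⊗[K₀] D), (∀ i, Φ (v i) = v i) →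
      Submodule.span L (Set.range v) ≤ Submodule.span L {x | Φ x = x}) := by
  let f : L ⊗[K₀] D →ₛₗ[(σ : L →+* L)] L ⊗[K₀] D :=
    { toFun := Φ, map_add' := haddΦ, map_smul' := hsemiΦ }
  refine ⟨fun c x hc hx => ?_, fun ι v hv hFind => ?_, fun ι v hv => ?_⟩
  · rw [hsemiΦ, hx, (hF c).mp hc]
  · refine linearIndependent_of_fixed f (fun c => (hF c).mpr) hv ?_
    exact linearIndependent_iff'.mpr fun s g hg i hi =>
      Subtype.ext (hFind s (fun k => g k) (fun k => (g k).2) hg i hi)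
  · exact Submodule.span_mono (Set.range_subset_iff.mpr hv)

/-- abstract form of the slope-0 descent. `K₀` plays the role of
`Frac(W(k))` with Frobenius `φ`, `L` the role of `K̂₀ᵘʳ = Frac(W(k̄))` with
Frobenius `σ` extending `φ`, and `F` the fixed subfield of `σ` (which is `ℚ_p`).
For a φ-module `D` over `K₀` with bijective φ-semilinear `φD`, let
`Φ = σ ⊗ φD` on `L ⊗[K₀] D`. Then the fixed points
`V(D) = {x : Φ x = x}` form an `F`-subspace (first conjunct), and the natural map
`V(D) ⊗_F L → D ⊗_{K₀} L` is injective, i.e. any `F`-linearly independent family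
of fixed vectors is `L`-linearly independent (second conjunct); its image is the
slope-0 part, the span of the fixed vectors (third conjunct, with the slope-0
part realized as the `L`-span of the `Φ`-fixed vectors). -/
theorem stmt6 (K₀ L : Type*) [Field K₀] [Field L] [Algebra K₀ L]
    (φ : K₀ ≃+* K₀) (σ : L ≃+* L)
    (hcompat : ∀ a : K₀, σ (algebraMap K₀ L a) = algebraMap K₀ L (φ a))
    (D : Type*) [AddCommGroup D] [Module K₀ D] [FiniteDimensional K₀ D]
    (φD : D → D) (haddD : ∀ x y, φD (x + y) = φD x + φD y)
    (hsemiD : ∀ (a : K₀) (x : D), φD (a • x) = φ a • φD x)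
    (hbijD : Function.Bijective φD)
    (Φ : L ⊗[K₀] D → L ⊗[K₀] D)
    (haddΦ : ∀ x y, Φ (x + y) = Φ x + Φ y)
    (hsemiΦ : ∀ (c : L) (x : L ⊗[K₀] D), Φ (c • x) = σ c • Φ x)
    (hΦ : ∀ (a : L) (d : D), Φ (a ⊗ₜ[K₀] d) = σ a ⊗ₜ[K₀] φD d)
    (F : Subfield L) (hF : ∀ c : L, c ∈ F ↔ σ c = c) :
    (∀ (c : L) (x : L ⊗[K₀] D), c ∈ F → Φ x = x → Φ (c • x) = c • x) ∧
    (∀ (ι : Type) (v : ι → L ⊗[K₀] D), (∀ i, Φ (v i) = v i) →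
      (∀ (s : Finset ι) (c : ι → L), (∀ i, c i ∈ F) →
        (∑ i ∈ s, c i • v i) = 0 → ∀ i ∈ s, c i = 0) →
      LinearIndependent L v) ∧
    (∀ (ι : Type) (v : ι → L ⊗[K₀] D), (∀ i, Φ (v i) = v i) →
      Submodule.span L (Set.range v) ≤ Submodule.span L {x | Φ x = x}) :=
  stmt6_general K₀ L σ D Φ haddΦ hsemiΦ F hF
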